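/- arXiv:1403.4028 — 4 statements merged into one kernel-verified Lean document; each statement's English description precedes it below -/
import Mathlib

section
/- Let m be a positive integer, 0 < λ < 1, f : ℝ^m → ℝ^m a λ-contraction, x⁰ ∈ ℝ^m, and define the Picard iteration xⁿ⁺¹ = f(xⁿ) and the real iteration t⁰ = 0, tⁿ⁺¹ = λ tⁿ + ‖x¹ − x⁰‖. Then the sequence (xⁿ, tⁿ) in ℝ^m × ℝ is increasing with respect to the order induced by the Lorentz cone L, bounded above (in that order) by every element of the set Ω, hence convergent; its limit (x*, t*) is a lower L-bound of Ω, and x* is the unique fixed point of f. -/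
/-!
In the Lorentz-cone order, `‖x(n+1) - x n‖ ≤ t(n+1) - t n` says the pair sequence increases;
the left side is at most `λⁿ ‖x¹ - x⁰‖` by contraction, and the right side equals it by the
closed form of the affine recurrence. An `L`-increasing sequence whose second component
converges has Cauchy first component, which gives the limit; the `L`-bound by `Ω` is an
induction using the triangle inequality through `f p`, and it passes to the limit since the
cone is closed.
-/

open Filter Topology Finset

section LorentzMonotone

variable {E : Type*} [NormedAddCommGroup E]

theorem cauchySeq_of_norm_sub_le_sub_of_tendsto {u : ℕ → E} {s : ℕ → ℝ} {a : ℝ}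
    (hu : ∀ n, ‖u (n + 1) - u n‖ ≤ s (n + 1) - s n) (hs : Tendsto s atTop (𝓝 a)) :
    CauchySeq u := by
  have hnonneg : ∀ n, 0 ≤ s (n + 1) - s n := fun n => (norm_nonneg _).trans (hu n)
  have hsum : HasSum (fun n => s (n + 1) - s n) (a - s 0) := by
    rw [hasSum_iff_tendsto_nat_of_nonneg hnonneg]
    simpa only [sum_range_sub] using hs.sub_const (s 0)
  refine cauchySeq_of_dist_le_of_summable _ (fun n => ?_) hsum.summable
  rw [dist_comm, dist_eq_norm]
  exact hu n

end LorentzMonotone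

section AffineRecurrence

variable {lam c : ℝ} {t : ℕ → ℝ}

theorem eq_sum_pow_mul_of_affine_recurrence (ht0 : t 0 = 0)
    (ht : ∀ n, t (n + 1) = lam * t n + c) (n : ℕ) : t n = ∑ i ∈ range n, lam ^ i * c := by
  induction n with
  | zero => simp [ht0]
  | succ n ih =>
    rw [ht, ih, sum_range_succ', mul_sum, pow_zero, one_mul]
    exact congrArg (· + c) (sum_congr rfl fun i _ => by ring)

theorem sub_eq_pow_mul_of_affine_recurrence (ht0 : t 0 = 0)
    (ht : ∀ n, t (n + 1) = lam * t n + c) (n : ℕ) : t (n + 1) - t n = lam ^ n * c := by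
  rw [eq_sum_pow_mul_of_affine_recurrence ht0 ht, eq_sum_pow_mul_of_affine_recurrence ht0 ht,
    sum_range_succ, add_sub_cancel_left]

theorem tendsto_of_affine_recurrence (hlam0 : 0 ≤ lam) (hlam1 : lam < 1) (ht0 : t 0 = 0)
    (ht : ∀ n, t (n + 1) = lam * t n + c) : Tendsto t atTop (𝓝 ((1 - lam)⁻¹ * c)) := by
  have := ((hasSum_geometric_of_lt_one hlam0 hlam1).mul_right c).tendsto_sum_nat
  simpa only [← eq_sum_pow_mul_of_affine_recurrence ht0 ht] using this

end AffineRecurrence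

section Contraction

variable {E : Type*} [NormedAddCommGroup E] {f : E → E} {lam : ℝ}

theorem norm_sub_succ_le_pow_mul (hf : ∀ a b, ‖f a - f b‖ ≤ lam * ‖a - b‖) (hlam0 : 0 ≤ lam)
    {x : ℕ → E} (hx : ∀ n, x (n + 1) = f (x n)) (n : ℕ) :
    ‖x (n + 1) - x n‖ ≤ lam ^ n * ‖x 1 - x 0‖ := by
  induction n with
  | zero => simp
  | succ n ih =>
    calc ‖x (n + 1 + 1) - x (n + 1)‖ = ‖f (x (n + 1)) - f (x n)‖ := by rw [hx, hx]
      _ ≤ lam * ‖x (n + 1) - x n‖ := hf _ _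
      _ ≤ lam * (lam ^ n * ‖x 1 - x 0‖) := by gcongr
      _ = lam ^ (n + 1) * ‖x 1 - x 0‖ := by ring

theorem norm_sub_le_sub_of_affine_recurrence (hf : ∀ a b, ‖f a - f b‖ ≤ lam * ‖a - b‖)
    (hlam0 : 0 ≤ lam) {x : ℕ → E} (hx : ∀ n, x (n + 1) = f (x n)) {t : ℕ → ℝ} (ht0 : t 0 = 0)
    (ht : ∀ n, t (n + 1) = lam * t n + ‖x 1 - x 0‖) {y : E} {s : ℝ} (hy0 : ‖y - x 0‖ ≤ s)
    (hy : ‖x 1 - x 0‖ + ‖f y - y‖ ≤ (1 - lam) * s) (n : ℕ) : ‖y - x n‖ ≤ s - t n := by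
  induction n with
  | zero => simpa [ht0] using hy0
  | succ n ih =>
    calc ‖y - x (n + 1)‖ ≤ ‖y - f y‖ + ‖f y - f (x n)‖ := by
          rw [hx]; exact norm_sub_le_norm_sub_add_norm_sub _ _ _
      _ ≤ ‖f y - y‖ + lam * (s - t n) := by
          rw [norm_sub_rev]; gcongr; exact (hf _ _).trans (by gcongr)
      _ ≤ s - t (n + 1) := by rw [ht]; linarith

theorem eq_of_isFixedPt_of_contraction (hf : ∀ a b, ‖f a - f b‖ ≤ lam * ‖a - b‖)
    (hlam1 : lam < 1) {a b : E} (ha : f a = a) (hb : f b = b) : a = b := by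
  have h := hf a b
  rw [ha, hb] at h
  have : ‖a - b‖ = 0 := by nlinarith [norm_nonneg (a - b)]
  exact sub_eq_zero.mp (norm_eq_zero.mp this)

theorem isFixedPt_of_tendsto_of_contraction (hf : ∀ a b, ‖f a - f b‖ ≤ lam * ‖a - b‖)
    (hlam0 : 0 ≤ lam) {x : ℕ → E} (hx : ∀ n, x (n + 1) = f (x n)) {z : E}
    (hz : Tendsto x atTop (𝓝 z)) : f z = z := by
  have hcont : Continuous f :=
    (LipschitzWith.of_dist_le_mul (K := ⟨lam, hlam0⟩) fun a b => by
      rw [dist_eq_norm, dist_eq_norm]; exact hf a b).continuous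
  have hsucc : Tendsto (fun n => x (n + 1)) atTop (𝓝 z) := (tendsto_add_atTop_iff_nat 1).mpr hz
  simp only [hx] at hsucc
  exact tendsto_nhds_unique ((hcont.tendsto z).comp hz) hsucc

end Contraction

theorem stmt_0_general (m : ℕ) (lam : ℝ) (hlam0 : 0 < lam) (hlam1 : lam < 1)
    (f : EuclideanSpace ℝ (Fin m) → EuclideanSpace ℝ (Fin m))
    (hf : ∀ x y, ‖f x - f y‖ ≤ lam * ‖x - y‖)
    (x : ℕ → EuclideanSpace ℝ (Fin m)) (t : ℕ → ℝ)
    (hx : ∀ n, x (n + 1) = f (x n)) (ht0 : t 0 = 0)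
    (ht : ∀ n, t (n + 1) = lam * t n + ‖x 1 - x 0‖)
    (Ω : Set (EuclideanSpace ℝ (Fin m) × ℝ))
    (hΩ : Ω = {p : EuclideanSpace ℝ (Fin m) × ℝ |
      ‖p.1 - x 0‖ ≤ p.2 ∧ (‖x 1 - x 0‖ + ‖f p.1 - p.1‖) / (1 - lam) ≤ p.2}) :
    (∀ n, ‖x (n + 1) - x n‖ ≤ t (n + 1) - t n) ∧
    (∀ p ∈ Ω, ∀ n, ‖p.1 - x n‖ ≤ p.2 - t n) ∧
    ∃ xs : EuclideanSpace ℝ (Fin m), ∃ ts : ℝ,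
      Filter.Tendsto (fun n => (x n, t n)) Filter.atTop (nhds (xs, ts)) ∧
      (∀ p ∈ Ω, ‖p.1 - xs‖ ≤ p.2 - ts) ∧
      f xs = xs ∧ ∀ y, f y = y → y = xs := by
  have hincr : ∀ n, ‖x (n + 1) - x n‖ ≤ t (n + 1) - t n := fun n => by
    rw [sub_eq_pow_mul_of_affine_recurrence ht0 ht]
    exact norm_sub_succ_le_pow_mul hf hlam0.le hx n
  have hbound : ∀ p ∈ Ω, ∀ n, ‖p.1 - x n‖ ≤ p.2 - t n := by
    rintro ⟨y, s⟩ hp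
    rw [hΩ] at hp
    obtain ⟨hy0, hy⟩ := hp
    rw [div_le_iff₀ (sub_pos.mpr hlam1), mul_comm] at hy
    exact norm_sub_le_sub_of_affine_recurrence hf hlam0.le hx ht0 ht hy0 hy
  have htlim := tendsto_of_affine_recurrence hlam0.le hlam1 ht0 ht
  obtain ⟨xs, hxlim⟩ :=
    cauchySeq_tendsto_of_complete (cauchySeq_of_norm_sub_le_sub_of_tendsto hincr htlim)
  have hfix := isFixedPt_of_tendsto_of_contraction hf hlam0.le hx hxlim
  refine ⟨hincr, hbound, xs, _, hxlim.prodMk_nhds htlim, fun p hp => ?_, hfix,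
    fun y hy => eq_of_isFixedPt_of_contraction hf hlam1 hy hfix⟩
  exact le_of_tendsto_of_tendsto' (tendsto_const_nhds.sub hxlim).norm
    (tendsto_const_nhds.sub htlim) (hbound p hp)

/-- The Banach fixed point principle viewed as a monotone convergence with respect to the
Lorentz cone: the sequence `(xⁿ, tⁿ)` is `L`-increasing, `L`-bounded above by every element of
`Ω`, hence convergent; its limit `(x*, t*)` is a lower `L`-bound of `Ω` and `x*` is the unique
fixed point of `f`. -/
theorem stmt_0 (m : ℕ) (hm : 0 < m) (lam : ℝ) (hlam0 : 0 < lam) (hlam1 : lam < 1)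
    (f : EuclideanSpace ℝ (Fin m) → EuclideanSpace ℝ (Fin m))
    (hf : ∀ x y, ‖f x - f y‖ ≤ lam * ‖x - y‖)
    (x : ℕ → EuclideanSpace ℝ (Fin m)) (t : ℕ → ℝ)
    (hx : ∀ n, x (n + 1) = f (x n)) (ht0 : t 0 = 0)
    (ht : ∀ n, t (n + 1) = lam * t n + ‖x 1 - x 0‖)
    (Ω : Set (EuclideanSpace ℝ (Fin m) × ℝ))
    (hΩ : Ω = {p : EuclideanSpace ℝ (Fin m) × ℝ |
      ‖p.1 - x 0‖ ≤ p.2 ∧ (‖x 1 - x 0‖ + ‖f p.1 - p.1‖) / (1 - lam) ≤ p.2}) :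
    (∀ n, ‖x (n + 1) - x n‖ ≤ t (n + 1) - t n) ∧
    (∀ p ∈ Ω, ∀ n, ‖p.1 - x n‖ ≤ p.2 - t n) ∧
    ∃ xs : EuclideanSpace ℝ (Fin m), ∃ ts : ℝ,
      Filter.Tendsto (fun n => (x n, t n)) Filter.atTop (nhds (xs, ts)) ∧
      (∀ p ∈ Ω, ‖p.1 - xs‖ ≤ p.2 - ts) ∧
      f xs = xs ∧ ∀ y, f y = y → y = xs :=
  stmt_0_general m lam hlam0 hlam1 f hf x t hx ht0 ht Ω hΩ
end

section
/- Let m be a positive integer, 0 < λ < 1, f : ℝ^m → ℝ^m a λ-contraction, x⁰ ∈ ℝ^m, and define xⁿ⁺¹ = f(xⁿ), t⁰ = 0, tⁿ⁺¹ = λ tⁿ + ‖x¹ − x⁰‖. Then for every (x,t) ∈ Ω and every n ∈ ℕ, ‖x − xⁿ‖ ≤ t − tⁿ; that is, every element of Ω is an upper bound of the sequence (xⁿ, tⁿ) with respect to the order induced by the Lorentz cone L. -/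
/-- Every element of `Ω` is an upper bound of the sequence `(xⁿ, tⁿ)` with respect to the order
induced by the Lorentz cone: for every `(x,t) ∈ Ω` and every `n`, `‖x − xⁿ‖ ≤ t − tⁿ`. -/
theorem stmt_2 (m : ℕ) (hm : 0 < m) (lam : ℝ) (hlam0 : 0 < lam) (hlam1 : lam < 1)
    (f : EuclideanSpace ℝ (Fin m) → EuclideanSpace ℝ (Fin m))
    (hf : ∀ x y, ‖f x - f y‖ ≤ lam * ‖x - y‖)
    (x : ℕ → EuclideanSpace ℝ (Fin m)) (t : ℕ → ℝ)
    (hx : ∀ n, x (n + 1) = f (x n)) (ht0 : t 0 = 0)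
    (ht : ∀ n, t (n + 1) = lam * t n + ‖x 1 - x 0‖)
    (Ω : Set (EuclideanSpace ℝ (Fin m) × ℝ))
    (hΩ : Ω = {p : EuclideanSpace ℝ (Fin m) × ℝ |
      ‖p.1 - x 0‖ ≤ p.2 ∧ (‖x 1 - x 0‖ + ‖f p.1 - p.1‖) / (1 - lam) ≤ p.2}) :
    ∀ p ∈ Ω, ∀ n, ‖p.1 - x n‖ ≤ p.2 - t n := by
  rintro ⟨y, s⟩ hp n
  rw [hΩ] at hp
  obtain ⟨h1, h2⟩ := hp
  have hlam' : 0 < 1 - lam := by linarith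
  rw [div_le_iff₀ hlam'] at h2
  induction n with
  | zero => simpa [ht0] using h1
  | succ n ih =>
    have key : ‖y - x (n + 1)‖ ≤ ‖f y - y‖ + lam * ‖y - x n‖ := by
      calc ‖y - x (n + 1)‖ ≤ ‖y - f y‖ + ‖f y - x (n + 1)‖ := norm_sub_le_norm_sub_add_norm_sub _ _ _
        _ = ‖f y - y‖ + ‖f y - f (x n)‖ := by rw [norm_sub_rev, hx n]
        _ ≤ ‖f y - y‖ + lam * ‖y - x n‖ := by linarith [hf y (x n)]
    have := mul_le_mul_of_nonneg_left ih hlam0.le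
    rw [ht n]
    nlinarith
end

section
/- Let m be a positive integer, 0 < λ < 1, f : ℝ^m → ℝ^m a λ-contraction, x⁰ ∈ ℝ^m, and define xⁿ⁺¹ = f(xⁿ), t⁰ = 0, tⁿ⁺¹ = λ tⁿ + ‖x¹ − x⁰‖. Let x* = lim xⁿ and t* = lim tⁿ. Then for every (x,t) ∈ Ω one has ‖x − x*‖ ≤ t − t*; that is, the limit (x*, t*) of the sequence (xⁿ, tⁿ) is a lower bound of Ω with respect to the order induced by the Lorentz cone L. -/
/-!
The limit `x*` is a fixed point of `f`, and `t* = ‖x¹ − x⁰‖ / (1 − λ)` solves the limiting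
recursion. A contraction moves every point at least `(1 − λ)` times its distance to a fixed point,
so for `(x, t) ∈ Ω` we get `‖x − x*‖ ≤ ‖f x − x‖ / (1 − λ) ≤ t − t*`.
-/

open Filter Function Topology NNReal

theorem isFixedPt_of_tendsto_of_succ_eq {α : Type*} [TopologicalSpace α] [T2Space α]
    {f : α → α} {u : ℕ → α} {a : α} (hu : ∀ n, u (n + 1) = f (u n))
    (hlim : Tendsto u atTop (𝓝 a)) (hf : ContinuousAt f a) : IsFixedPt f a := by
  have hshift : Tendsto (fun n => u (n + 1)) atTop (𝓝 a) := hlim.comp (tendsto_add_atTop_nat 1)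
  simp only [hu] at hshift
  exact tendsto_nhds_unique (hf.tendsto.comp hlim) hshift

theorem contractingWith_of_norm_sub_le {E : Type*} [NormedAddCommGroup E] {f : E → E}
    {K : ℝ≥0} (hK : K < 1) (hf : ∀ x y, ‖f x - f y‖ ≤ K * ‖x - y‖) : ContractingWith K f :=
  ⟨hK, LipschitzWith.of_dist_le_mul fun x y => by simpa only [dist_eq_norm] using hf x y⟩

theorem stmt_5_general (m : ℕ) (lam : ℝ) (hlam0 : 0 < lam) (hlam1 : lam < 1)
    (f : EuclideanSpace ℝ (Fin m) → EuclideanSpace ℝ (Fin m))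
    (hf : ∀ x y, ‖f x - f y‖ ≤ lam * ‖x - y‖)
    (x : ℕ → EuclideanSpace ℝ (Fin m)) (t : ℕ → ℝ)
    (hx : ∀ n, x (n + 1) = f (x n))
    (ht : ∀ n, t (n + 1) = lam * t n + ‖x 1 - x 0‖)
    (xs : EuclideanSpace ℝ (Fin m)) (ts : ℝ)
    (hxs : Filter.Tendsto x Filter.atTop (nhds xs))
    (hts : Filter.Tendsto t Filter.atTop (nhds ts))
    (Ω : Set (EuclideanSpace ℝ (Fin m) × ℝ))
    (hΩ : Ω = {p : EuclideanSpace ℝ (Fin m) × ℝ |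
      ‖p.1 - x 0‖ ≤ p.2 ∧ (‖x 1 - x 0‖ + ‖f p.1 - p.1‖) / (1 - lam) ≤ p.2}) :
    ∀ p ∈ Ω, ‖p.1 - xs‖ ≤ p.2 - ts := by
  rintro ⟨y, s⟩ hp
  obtain ⟨-, hs⟩ : ‖y - x 0‖ ≤ s ∧ (‖x 1 - x 0‖ + ‖f y - y‖) / (1 - lam) ≤ s := by rwa [hΩ] at hp
  have hf' : ContractingWith ⟨lam, hlam0.le⟩ f := contractingWith_of_norm_sub_le hlam1 hf
  have hxs_fixed : IsFixedPt f xs :=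
    isFixedPt_of_tendsto_of_succ_eq hx hxs hf'.2.continuous.continuousAt
  have hts_fixed : IsFixedPt (fun r => lam * r + ‖x 1 - x 0‖) ts :=
    isFixedPt_of_tendsto_of_succ_eq ht hts (by fun_prop)
  have hgap : 0 < 1 - lam := sub_pos.mpr hlam1
  have hdist : ‖y - xs‖ ≤ ‖f y - y‖ / (1 - lam) := by
    have h := hf'.dist_le_of_fixedPoint y hxs_fixed
    rwa [dist_eq_norm, dist_eq_norm, norm_sub_rev y (f y)] at h
  rw [div_le_iff₀ hgap] at hs
  rw [le_div_iff₀ hgap] at hdist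
  change lam * ts + ‖x 1 - x 0‖ = ts at hts_fixed
  nlinarith

/-- The limit `(x*, t*)` of the sequence `(xⁿ, tⁿ)` is a lower bound of `Ω` with respect to the
order induced by the Lorentz cone: for every `(x,t) ∈ Ω`, `‖x − x*‖ ≤ t − t*`. -/
theorem stmt_5 (m : ℕ) (hm : 0 < m) (lam : ℝ) (hlam0 : 0 < lam) (hlam1 : lam < 1)
    (f : EuclideanSpace ℝ (Fin m) → EuclideanSpace ℝ (Fin m))
    (hf : ∀ x y, ‖f x - f y‖ ≤ lam * ‖x - y‖)
    (x : ℕ → EuclideanSpace ℝ (Fin m)) (t : ℕ → ℝ)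
    (hx : ∀ n, x (n + 1) = f (x n)) (ht0 : t 0 = 0)
    (ht : ∀ n, t (n + 1) = lam * t n + ‖x 1 - x 0‖)
    (xs : EuclideanSpace ℝ (Fin m)) (ts : ℝ)
    (hxs : Filter.Tendsto x Filter.atTop (nhds xs))
    (hts : Filter.Tendsto t Filter.atTop (nhds ts))
    (Ω : Set (EuclideanSpace ℝ (Fin m) × ℝ))
    (hΩ : Ω = {p : EuclideanSpace ℝ (Fin m) × ℝ |
      ‖p.1 - x 0‖ ≤ p.2 ∧ (‖x 1 - x 0‖ + ‖f p.1 - p.1‖) / (1 - lam) ≤ p.2}) :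
    ∀ p ∈ Ω, ‖p.1 - xs‖ ≤ p.2 - ts :=
  stmt_5_general m lam hlam0 hlam1 f hf x t hx ht xs ts hxs hts Ω hΩ
end

section
/- Let m be a positive integer, 0 < λ < 1, f : ℝ^m → ℝ^m a λ-contraction, x⁰ ∈ ℝ^m, and define xⁿ⁺¹ = f(xⁿ), t⁰ = 0, tⁿ⁺¹ = λ tⁿ + ‖x¹ − x⁰‖. If (x,t) ∈ Ω and n ∈ ℕ are such that ‖x − xⁿ‖ ≤ t − tⁿ, then ‖x − xⁿ⁺¹‖ ≤ t − tⁿ⁺¹. (Induction step showing that each element of Ω dominates the whole sequence (xⁿ, tⁿ) in the Lorentz-cone order.) -/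
/-- Induction step: if `(x,t) ∈ Ω` and `‖x − xⁿ‖ ≤ t − tⁿ`, then `‖x − xⁿ⁺¹‖ ≤ t − tⁿ⁺¹`. -/
theorem stmt_7 (m : ℕ) (hm : 0 < m) (lam : ℝ) (hlam0 : 0 < lam) (hlam1 : lam < 1)
    (f : EuclideanSpace ℝ (Fin m) → EuclideanSpace ℝ (Fin m))
    (hf : ∀ x y, ‖f x - f y‖ ≤ lam * ‖x - y‖)
    (x : ℕ → EuclideanSpace ℝ (Fin m)) (t : ℕ → ℝ)
    (hx : ∀ n, x (n + 1) = f (x n)) (ht0 : t 0 = 0)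
    (ht : ∀ n, t (n + 1) = lam * t n + ‖x 1 - x 0‖)
    (p : EuclideanSpace ℝ (Fin m) × ℝ)
    (hp : p ∈ {q : EuclideanSpace ℝ (Fin m) × ℝ |
      ‖q.1 - x 0‖ ≤ q.2 ∧ (‖x 1 - x 0‖ + ‖f q.1 - q.1‖) / (1 - lam) ≤ q.2})
    (n : ℕ) (hn : ‖p.1 - x n‖ ≤ p.2 - t n) :
    ‖p.1 - x (n + 1)‖ ≤ p.2 - t (n + 1) := by
  obtain ⟨h1, h2⟩ := hp
  have hlam1' : (0:ℝ) < 1 - lam := by linarith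
  have h2' : ‖x 1 - x 0‖ + ‖f p.1 - p.1‖ ≤ (1 - lam) * p.2 := by
    rw [div_le_iff₀ hlam1'] at h2; linarith [h2]
  have htri : ‖p.1 - x (n+1)‖ ≤ ‖p.1 - f p.1‖ + ‖f p.1 - x (n+1)‖ :=
    norm_sub_le_norm_sub_add_norm_sub _ _ _
  have hstep : ‖f p.1 - x (n+1)‖ ≤ lam * ‖p.1 - x n‖ := by
    rw [hx n]; exact hf _ _
  have hs : ‖p.1 - f p.1‖ = ‖f p.1 - p.1‖ := norm_sub_rev _ _
  have hlam' : lam * ‖p.1 - x n‖ ≤ lam * (p.2 - t n) :=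
    mul_le_mul_of_nonneg_left hn hlam0.le
  rw [ht n]
  nlinarith [htri, hstep, hs, h2', hlam']
end
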